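/- For D > 0, v > 0, k ≥ 0, and any real y ≠ 0, the improper integral ∫₀^∞ (1/√(4πDt)) · exp(−(y − v t)²/(4Dt)) · exp(−k t) dt equals exp( (y v)/(2D) · (1 − sgn(y)·√(1 + 4Dk/v²)) ) / ( v · √(1 + 4Dk/v²) ). -/

import Mathlib

open Real MeasureTheory

lemma img_inv (c : ℝ) (hc : 0 < c) : (fun s : ℝ => c / s) '' Set.Ioi 0 = Set.Ioi 0 := by
  ext x
  simp only [Set.mem_image, Set.mem_Ioi]
  constructor
  · rintro ⟨s, hs, rfl⟩; exact div_pos hc hs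
  · intro hx; exact ⟨c / x, div_pos hc hx, by field_simp⟩

lemma img_sq : (fun s : ℝ => s ^ 2) '' Set.Ioi 0 = Set.Ioi 0 := by
  ext x
  simp only [Set.mem_image, Set.mem_Ioi]
  constructor
  · rintro ⟨s, hs, rfl⟩; exact pow_pos hs 2
  · intro hx; exact ⟨Real.sqrt x, Real.sqrt_pos.2 hx, Real.sq_sqrt hx.le⟩

lemma img_u (p q : ℝ) (hp : 0 < p) (hq : 0 < q) :
    (fun s : ℝ => p * s - q / s) '' Set.Ioi 0 = Set.univ := by
  ext r
  simp only [Set.mem_image, Set.mem_Ioi, Set.mem_univ, iff_true]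
  set w := Real.sqrt (r ^ 2 + 4 * p * q) with hw
  have hw2 : w ^ 2 = r ^ 2 + 4 * p * q := Real.sq_sqrt (by positivity)
  have hwr : |r| < w := by
    rw [← Real.sqrt_sq_eq_abs]
    exact Real.sqrt_lt_sqrt (by positivity) (by nlinarith)
  have hs : 0 < (r + w) / (2 * p) := by
    have := abs_nonneg r
    have := neg_abs_le r
    apply div_pos (by linarith) (by linarith)
  refine ⟨(r + w) / (2 * p), hs, ?_⟩
  have h2p : (2 * p) ≠ 0 := by positivity
  have hrw : r + w ≠ 0 := by nlinarith [abs_nonneg r, neg_abs_le r]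
  field_simp
  nlinarith [hw2]

lemma integrable_g (a b : ℝ) (ha : 0 < a) (hb : 0 < b) :
    IntegrableOn (fun s : ℝ => Real.exp (-(b * s ^ 2 + a / s ^ 2))) (Set.Ioi 0) := by
  apply Integrable.mono' ((integrable_exp_neg_mul_sq hb).restrict (s := Set.Ioi 0))
  · exact (Measurable.aestronglyMeasurable (by fun_prop)).restrict
  · filter_upwards [ae_restrict_mem measurableSet_Ioi] with s hs
    rw [Real.norm_eq_abs, abs_of_pos (Real.exp_pos _)]
    apply Real.exp_le_exp.2
    have : 0 < s := hs
    have : 0 ≤ a / s ^ 2 := by positivity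
    linarith

lemma integrable_g2 (a b : ℝ) (ha : 0 < a) (hb : 0 < b) :
    IntegrableOn (fun s : ℝ => Real.sqrt a / s ^ 2 *
      Real.exp (-(b * s ^ 2 + a / s ^ 2))) (Set.Ioi 0) := by
  have key : ∀ s : ℝ, 0 < s →
      Real.sqrt a / s ^ 2 * Real.exp (-(b * s ^ 2 + a / s ^ 2)) ≤
        (1 / Real.sqrt a) * Real.exp (-b * s ^ 2) := by
    intro s hs
    have hx : 0 < a / s ^ 2 := by positivity
    have h1 : a / s ^ 2 * Real.exp (-(a / s ^ 2)) ≤ 1 := by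
      rw [Real.exp_neg]
      rw [mul_inv_le_iff₀ (Real.exp_pos _)]
      calc a / s ^ 2 ≤ Real.exp (a / s ^ 2) := (Real.add_one_le_exp _).trans' (by linarith)
        _ = 1 * Real.exp (a / s ^ 2) := (one_mul _).symm
    have hsa : Real.sqrt a > 0 := Real.sqrt_pos.2 ha
    have hrw : Real.exp (-(b * s ^ 2 + a / s ^ 2)) =
        Real.exp (-(a / s ^ 2)) * Real.exp (-b * s ^ 2) := by
      rw [← Real.exp_add]; ring_nf
    rw [hrw]
    have hsqa : Real.sqrt a / s ^ 2 = (1 / Real.sqrt a) * (a / s ^ 2) := by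
      field_simp
      exact Real.sq_sqrt ha.le
    rw [hsqa]
    calc 1 / Real.sqrt a * (a / s ^ 2) * (Real.exp (-(a / s ^ 2)) * Real.exp (-b * s ^ 2))
        = (1 / Real.sqrt a) * (a / s ^ 2 * Real.exp (-(a / s ^ 2))) * Real.exp (-b * s ^ 2) := by ring
      _ ≤ (1 / Real.sqrt a) * 1 * Real.exp (-b * s ^ 2) := by
          apply mul_le_mul_of_nonneg_right _ (Real.exp_pos _).le
          exact mul_le_mul_of_nonneg_left h1 (by positivity)
      _ = (1 / Real.sqrt a) * Real.exp (-b * s ^ 2) := by ring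
  apply Integrable.mono' (((integrable_exp_neg_mul_sq hb).const_mul (1 / Real.sqrt a)).restrict
    (s := Set.Ioi 0))
  · exact (Measurable.aestronglyMeasurable (by fun_prop)).restrict
  · filter_upwards [ae_restrict_mem measurableSet_Ioi] with s hs
    have hs' : (0:ℝ) < s := hs
    rw [Real.norm_eq_abs, abs_of_nonneg (by positivity)]
    exact key s hs'

lemma key_I (a b : ℝ) (ha : 0 < a) (hb : 0 < b) :
    ∫ s in Set.Ioi (0:ℝ), Real.exp (-(b * s ^ 2 + a / s ^ 2)) =
      Real.sqrt π * Real.exp (-(2 * Real.sqrt (a * b))) / (2 * Real.sqrt b) := by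
  set pa := Real.sqrt a with hpa
  set pb := Real.sqrt b with hpb
  have hpa0 : 0 < pa := Real.sqrt_pos.2 ha
  have hpb0 : 0 < pb := Real.sqrt_pos.2 hb
  have hpa2 : pa ^ 2 = a := Real.sq_sqrt ha.le
  have hpb2 : pb ^ 2 = b := Real.sq_sqrt hb.le
  have hab : Real.sqrt (a * b) = pa * pb := Real.sqrt_mul ha.le b
  set c := pa / pb with hc
  have hc0 : 0 < c := div_pos hpa0 hpb0
  set g : ℝ → ℝ := fun s => Real.exp (-(b * s ^ 2 + a / s ^ 2)) with hg
  -- symmetry step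
  have hsym : ∫ s in Set.Ioi (0:ℝ), g s = ∫ s in Set.Ioi (0:ℝ), c / s ^ 2 * g s := by
    have himg := img_inv c hc0
    have hstep := MeasureTheory.integral_image_eq_integral_abs_deriv_smul
      (s := Set.Ioi (0:ℝ)) (f := fun s => c / s) (f' := fun s => -(c / s ^ 2))
      measurableSet_Ioi
      (fun x hx => by
        have hx' : (0:ℝ) < x := hx
        have h1 : HasDerivAt (fun s : ℝ => c * s⁻¹) (c * (-(x ^ 2)⁻¹)) x :=
          (hasDerivAt_inv hx'.ne').const_mul c
        have h2 : HasDerivAt (fun s : ℝ => c / s) (-(c / x ^ 2)) x := by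
          simpa [div_eq_mul_inv, mul_comm, mul_neg] using h1
        exact h2.hasDerivWithinAt)
      (fun x hx y hy h => by
        have hx' : (0:ℝ) < x := hx
        have hy' : (0:ℝ) < y := hy
        simp only at h
        rw [div_eq_div_iff hx'.ne' hy'.ne'] at h
        exact mul_left_cancel₀ hc0.ne' (by linarith)) g
    rw [himg] at hstep
    rw [hstep]
    apply MeasureTheory.setIntegral_congr_fun measurableSet_Ioi
    intro s hs
    have hs' : (0:ℝ) < s := hs
    have harg : b * (c / s) ^ 2 + a / (c / s) ^ 2 = b * s ^ 2 + a / s ^ 2 := by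
      have hc2 : c ^ 2 = a / b := by rw [hc, div_pow, hpa2, hpb2]
      field_simp [hc2]
      have hbc : b * c ^ 2 = a := by rw [hc2]; field_simp
      linear_combination (c ^ 2 - s ^ 4) * hbc
    simp only [smul_eq_mul, hg, abs_neg, abs_of_pos (by positivity : (0:ℝ) < c / s ^ 2), harg]
  -- Glasser step
  have hmain : Real.sqrt π * Real.exp (-(2 * Real.sqrt (a * b))) =
      ∫ s in Set.Ioi (0:ℝ), (pb + pa / s ^ 2) * g s := by
    have himg := img_u pb pa hpb0 hpa0
    have hstep := MeasureTheory.integral_image_eq_integral_abs_deriv_smul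
      (s := Set.Ioi (0:ℝ)) (f := fun s => pb * s - pa / s) (f' := fun s => pb + pa / s ^ 2)
      measurableSet_Ioi
      (fun x hx => by
        have hx' : (0:ℝ) < x := hx
        have h1 : HasDerivAt (fun s : ℝ => pb * s - pa * s⁻¹)
            (pb * 1 - pa * (-(x ^ 2)⁻¹)) x :=
          ((hasDerivAt_id x).const_mul pb).sub ((hasDerivAt_inv hx'.ne').const_mul pa)
        have h2 : HasDerivAt (fun s : ℝ => pb * s - pa / s) (pb + pa / x ^ 2) x := by
          simpa [div_eq_mul_inv, mul_neg, sub_neg_eq_add] using h1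
        exact h2.hasDerivWithinAt)
      (fun x hx y hy h => by
        have hx' : (0:ℝ) < x := hx
        have hy' : (0:ℝ) < y := hy
        simp only at h
        by_contra hne
        rcases lt_or_gt_of_ne hne with hlt | hlt
        · have h1 : pb * x < pb * y := by nlinarith
          have h2 : pa / y < pa / x := div_lt_div_of_pos_left hpa0 hx' hlt
          linarith
        · have h1 : pb * y < pb * x := by nlinarith
          have h2 : pa / x < pa / y := div_lt_div_of_pos_left hpa0 hy' hlt
          linarith)
      (fun x => Real.exp (-(x ^ 2) - 2 * Real.sqrt (a * b)))
    rw [himg, MeasureTheory.setIntegral_univ] at hstep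
    have hlhs : (∫ x : ℝ, Real.exp (-(x ^ 2) - 2 * Real.sqrt (a * b))) =
        Real.sqrt π * Real.exp (-(2 * Real.sqrt (a * b))) := by
      have : ∀ x : ℝ, Real.exp (-(x ^ 2) - 2 * Real.sqrt (a * b)) =
          Real.exp (-(2 * Real.sqrt (a * b))) * Real.exp (-1 * x ^ 2) := by
        intro x; rw [← Real.exp_add]; ring_nf
      simp_rw [this]
      rw [MeasureTheory.integral_const_mul, integral_gaussian]
      rw [div_one]
      ring
    rw [hlhs] at hstep
    rw [hstep]
    apply MeasureTheory.setIntegral_congr_fun measurableSet_Ioi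
    intro s hs
    have hs' : (0:ℝ) < s := hs
    have harg : -((pb * s - pa / s) ^ 2) - 2 * Real.sqrt (a * b) =
        -(b * s ^ 2 + a / s ^ 2) := by
      rw [hab]
      field_simp
      linear_combination (-(s^2*s^2)) * hpb2 - hpa2
    simp only [smul_eq_mul, hg, abs_of_pos (by positivity : (0:ℝ) < pb + pa / s ^ 2), harg]
  -- combine
  have hadd : ∫ s in Set.Ioi (0:ℝ), (pb + pa / s ^ 2) * g s =
      (∫ s in Set.Ioi (0:ℝ), pb * g s) + ∫ s in Set.Ioi (0:ℝ), pa / s ^ 2 * g s := by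
    rw [← MeasureTheory.integral_add ((integrable_g a b ha hb).const_mul pb)
      (integrable_g2 a b ha hb)]
    apply MeasureTheory.setIntegral_congr_fun measurableSet_Ioi
    intro s hs
    ring
  have h1 : (∫ s in Set.Ioi (0:ℝ), pb * g s) = pb * ∫ s in Set.Ioi (0:ℝ), g s :=
    MeasureTheory.integral_const_mul pb g
  have h2 : (∫ s in Set.Ioi (0:ℝ), pa / s ^ 2 * g s) = pb * ∫ s in Set.Ioi (0:ℝ), g s := by
    rw [hsym, ← MeasureTheory.integral_const_mul]
    apply MeasureTheory.setIntegral_congr_fun measurableSet_Ioi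
    intro s hs
    have : pa = pb * c := by rw [hc]; field_simp
    simp only [this]
    ring
  rw [hadd, h1, h2] at hmain
  have : Real.sqrt π * Real.exp (-(2 * Real.sqrt (a * b))) =
      2 * pb * ∫ s in Set.Ioi (0:ℝ), g s := by rw [hmain]; ring
  rw [eq_div_iff (by positivity : 2 * pb ≠ 0)]
  linarith [this]

lemma cov_sq (a b : ℝ) (ha : 0 < a) (hb : 0 < b) :
    ∫ t in Set.Ioi (0:ℝ), (1 / Real.sqrt t) * Real.exp (-(b * t + a / t)) =
      Real.sqrt π * Real.exp (-(2 * Real.sqrt (a * b))) / Real.sqrt b := by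
  have hstep := MeasureTheory.integral_image_eq_integral_abs_deriv_smul
    (s := Set.Ioi (0:ℝ)) (f := fun s => s ^ 2) (f' := fun s => 2 * s)
    measurableSet_Ioi
    (fun x hx => by
      have h1 : HasDerivAt (fun s : ℝ => s ^ 2) (2 * x) x := by
        simpa [mul_comm] using hasDerivAt_pow 2 x
      exact h1.hasDerivWithinAt)
    (fun x hx y hy h => by
      have hx' : (0:ℝ) < x := hx
      have hy' : (0:ℝ) < y := hy
      simp only at h
      have : |x| = |y| := by
        rw [← Real.sqrt_sq_eq_abs, ← Real.sqrt_sq_eq_abs, h]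
      rwa [abs_of_pos hx', abs_of_pos hy'] at this)
    (fun t => (1 / Real.sqrt t) * Real.exp (-(b * t + a / t)))
  rw [img_sq] at hstep
  rw [hstep]
  have hcong : ∫ s in Set.Ioi (0:ℝ),
      |2 * s| • ((1 / Real.sqrt (s ^ 2)) * Real.exp (-(b * s ^ 2 + a / s ^ 2))) =
      ∫ s in Set.Ioi (0:ℝ), 2 * Real.exp (-(b * s ^ 2 + a / s ^ 2)) := by
    apply MeasureTheory.setIntegral_congr_fun measurableSet_Ioi
    intro s hs
    have hs' : (0:ℝ) < s := hs
    simp only [smul_eq_mul]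
    rw [abs_of_pos (by positivity : (0:ℝ) < 2 * s), Real.sqrt_sq hs'.le]
    field_simp
  rw [hcong, MeasureTheory.integral_const_mul, key_I a b ha hb]
  field_simp

theorem steady_state_advection_diffusion_integral
    (D v k y : ℝ) (hD : 0 < D) (hv : 0 < v) (hk : 0 ≤ k) (hy : y ≠ 0) :
    ∫ t in Set.Ioi (0 : ℝ),
        (1 / Real.sqrt (4 * Real.pi * D * t)) *
          Real.exp (-(y - v * t) ^ 2 / (4 * D * t)) * Real.exp (-k * t) =
      Real.exp ((y * v / (2 * D)) *
          (1 - Real.sign y * Real.sqrt (1 + 4 * D * k / v ^ 2))) /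
        (v * Real.sqrt (1 + 4 * D * k / v ^ 2)) := by
  have hy2 : 0 < y ^ 2 := by rcases hy.lt_or_gt with h | h <;> nlinarith
  set a := y ^ 2 / (4 * D) with hadef
  set b := v ^ 2 / (4 * D) + k with hbdef
  have ha : 0 < a := by positivity
  have hb : 0 < b := by positivity
  have hcong : ∫ t in Set.Ioi (0 : ℝ),
      (1 / Real.sqrt (4 * Real.pi * D * t)) *
        Real.exp (-(y - v * t) ^ 2 / (4 * D * t)) * Real.exp (-k * t) =
      ∫ t in Set.Ioi (0 : ℝ), (Real.exp (y * v / (2 * D)) / Real.sqrt (4 * Real.pi * D)) *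
        ((1 / Real.sqrt t) * Real.exp (-(b * t + a / t))) := by
    apply MeasureTheory.setIntegral_congr_fun measurableSet_Ioi
    intro t ht
    have ht' : (0:ℝ) < t := ht
    have h1 : Real.sqrt (4 * Real.pi * D * t) = Real.sqrt (4 * Real.pi * D) * Real.sqrt t :=
      Real.sqrt_mul (by positivity) t
    have h2 : Real.exp (-(y - v * t) ^ 2 / (4 * D * t)) * Real.exp (-k * t) =
        Real.exp (y * v / (2 * D)) * Real.exp (-(b * t + a / t)) := by
      rw [← Real.exp_add, ← Real.exp_add]
      congr 1
      rw [hbdef, hadef]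
      field_simp
      ring
    beta_reduce
    rw [h1, mul_assoc, h2]
    ring
  rw [hcong, MeasureTheory.integral_const_mul, cov_sq a b ha hb]
  set W := Real.sqrt (v ^ 2 + 4 * D * k) with hWdef
  have hW0 : 0 < W := Real.sqrt_pos.2 (by positivity)
  have hW2 : W ^ 2 = v ^ 2 + 4 * D * k := Real.sq_sqrt (by positivity)
  have hS : Real.sqrt (1 + 4 * D * k / v ^ 2) = W / v := by
    rw [show 1 + 4 * D * k / v ^ 2 = (v ^ 2 + 4 * D * k) / v ^ 2 by field_simp,
      Real.sqrt_div (by positivity), hWdef, Real.sqrt_sq hv.le]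
  have hsb : Real.sqrt b = W / (2 * Real.sqrt D) := by
    rw [show b = (W / (2 * Real.sqrt D)) ^ 2 by
      rw [div_pow, hW2, mul_pow, Real.sq_sqrt hD.le, hbdef]; field_simp; ring]
    exact Real.sqrt_sq (by positivity)
  have hsab : Real.sqrt (a * b) = |y| * W / (4 * D) := by
    rw [show a * b = (|y| * W / (4 * D)) ^ 2 by
      rw [div_pow, mul_pow, sq_abs, hW2, hadef, hbdef]; field_simp]
    exact Real.sqrt_sq (by positivity)
  have h4 : Real.sqrt (4 * Real.pi * D) = 2 * Real.sqrt Real.pi * Real.sqrt D := by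
    rw [show 4 * Real.pi * D = (2 * Real.sqrt Real.pi * Real.sqrt D) ^ 2 by
      rw [mul_pow, mul_pow, Real.sq_sqrt Real.pi_nonneg, Real.sq_sqrt hD.le]; ring]
    exact Real.sqrt_sq (by positivity)
  have habs : Real.sign y * y = |y| := by
    rcases hy.lt_or_gt with h | h
    · rw [Real.sign_of_neg h, abs_of_neg h]; ring
    · rw [Real.sign_of_pos h, abs_of_pos h]; ring
  have hE : (y * v / (2 * D)) * (1 - Real.sign y * (W / v)) =
      y * v / (2 * D) + -(2 * (|y| * W / (4 * D))) := by
    rw [← habs]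
    field_simp
    ring
  rw [hS, hE, Real.exp_add, hsb, hsab]
  have hπ : Real.sqrt Real.pi ≠ 0 := (Real.sqrt_pos.2 Real.pi_pos).ne'
  have hD' : Real.sqrt D ≠ 0 := (Real.sqrt_pos.2 hD).ne'
  rw [h4, show v * (W / v) = W by field_simp]
  field_simp
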